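/- arXiv:2510.03722 — 4 statements merged into one kernel-verified Lean document; each statement's English description precedes it below -/
import Mathlib

section
/- Let A be a real symmetric positive semidefinite d×d matrix, let λ > 0, u > 0, and b, γ ≥ 0, and let g : ℝ → ℝ satisfy, for every eigenvalue σ of A, |g(σ)·σ| ≤ b and |1 − g(σ)·σ|·σ^u ≤ γ·λ^u. Then ‖(g(A)·A − I)·(λI + A)^u‖ ≤ 2^u·(b + 1 + γ)·λ^u. -/
/-! The matrix is `F(A)` for `F(t) = (g(t)t - 1)(λ + t)^u`, so its operator norm is at most the
largest `|F(σ)|` over the eigenvalues `σ` of `A`. Pointwise, `(λ + σ)^u ≤ 2^u (λ^u + σ^u)`; the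
first hypothesis bounds `|g(σ)σ - 1| λ^u` by `(b + 1) λ^u` and the second bounds
`|g(σ)σ - 1| σ^u` by `γ λ^u`. -/

open Matrix MeasureTheory

/-- The operator norm of a real `d × d` matrix induced by the Euclidean norm on `ℝ^d`. -/
noncomputable def opNorm {d : ℕ} (A : Matrix (Fin d) (Fin d) ℝ) : ℝ :=
  ‖Matrix.toEuclideanCLM (𝕜 := ℝ) A‖

/-- The Euclidean norm `‖x‖₂` of a vector `x ∈ ℝ^d`. -/
noncomputable def enorm2 {d : ℕ} (x : Fin d → ℝ) : ℝ :=
  Real.sqrt (∑ i, x i ^ 2)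

/-- Apply a scalar function to the eigenvalues of a symmetric matrix (continuous
functional calculus); junk value `0` if the matrix is not symmetric. -/
noncomputable def matFun {d : ℕ} (A : Matrix (Fin d) (Fin d) ℝ) (h : ℝ → ℝ) :
    Matrix (Fin d) (Fin d) ℝ :=
  if hA : A.IsHermitian then
    (hA.eigenvectorUnitary : Matrix (Fin d) (Fin d) ℝ) *
      Matrix.diagonal (fun i => h (hA.eigenvalues i)) *
      star (hA.eigenvectorUnitary : Matrix (Fin d) (Fin d) ℝ)
  else 0

open scoped Matrix.Norms.L2Operator

lemma Real.add_rpow_le_two_rpow_mul_rpow_add_rpow {a b p : ℝ} (ha : 0 ≤ a) (hb : 0 ≤ b)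
    (hp : 0 ≤ p) : (a + b) ^ p ≤ 2 ^ p * (a ^ p + b ^ p) := calc
  (a + b) ^ p ≤ (2 * max a b) ^ p := by gcongr; rw [two_mul]; gcongr <;> simp
  _ = 2 ^ p * max a b ^ p := Real.mul_rpow zero_le_two (le_max_of_le_left ha)
  _ ≤ 2 ^ p * (a ^ p + b ^ p) := by
    gcongr
    rcases max_cases a b with ⟨h, -⟩ | ⟨h, -⟩ <;> rw [h] <;> simp [Real.rpow_nonneg, ha, hb]

lemma abs_sub_one_mul_add_rpow_le {lam s u x b γ : ℝ} (hlam : 0 ≤ lam) (hs : 0 ≤ s)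
    (hu : 0 ≤ u) (hx : |x| ≤ b) (hres : |1 - x| * s ^ u ≤ γ * lam ^ u) :
    |(x - 1) * (lam + s) ^ u| ≤ 2 ^ u * (b + 1 + γ) * lam ^ u := by
  have hx1 : |x - 1| ≤ b + 1 := (abs_sub _ _).trans (by simpa using hx)
  rw [abs_sub_comm] at hres
  calc |(x - 1) * (lam + s) ^ u| = |x - 1| * (lam + s) ^ u := by
        rw [abs_mul, abs_of_nonneg (Real.rpow_nonneg (by positivity) u)]
    _ ≤ |x - 1| * (2 ^ u * (lam ^ u + s ^ u)) := by
        gcongr; exact Real.add_rpow_le_two_rpow_mul_rpow_add_rpow hlam hs hu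
    _ = 2 ^ u * (|x - 1| * lam ^ u + |x - 1| * s ^ u) := by ring
    _ ≤ 2 ^ u * ((b + 1) * lam ^ u + γ * lam ^ u) := by gcongr
    _ = 2 ^ u * (b + 1 + γ) * lam ^ u := by ring

section
variable {R A : Type*} {p : A → Prop} [CommSemiring R] [StarRing R] [MetricSpace R]
  [IsTopologicalSemiring R] [ContinuousStar R] [TopologicalSpace A] [Ring A] [StarRing A]
  [Algebra R A] [ContinuousFunctionalCalculus R A p] [ContinuousMap.UniqueHom R A]

lemma cfc_comp_const_add (r : R) (f : R → R) (a : A)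
    (hf : ContinuousOn f ((r + ·) '' spectrum R a) := by cfc_cont_tac) (ha : p a := by cfc_tac) :
    cfc (fun x => f (r + x)) a = cfc f (algebraMap R A r + a) := by
  rw [cfc_comp' f (r + ·) a, cfc_const_add r (fun x => x) a, cfc_id' R a]

end

namespace Matrix

variable {n 𝕜 : Type*} [Fintype n] [DecidableEq n] [RCLike 𝕜]

lemma IsHermitian.l2_opNorm_cfc_le {A : Matrix n n 𝕜} (hA : A.IsHermitian) {f : ℝ → ℝ} {C : ℝ}
    (hC : 0 ≤ C) (hf : ∀ i, |f (hA.eigenvalues i)| ≤ C) : ‖cfc f A‖ ≤ C := by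
  rw [hA.cfc_eq, IsHermitian.cfc, Unitary.conjStarAlgAut_apply, mul_assoc,
    CStarRing.norm_mem_unitary_mul _ (SetLike.coe_mem _),
    CStarRing.norm_mul_mem_unitary _ (Unitary.star_mem (SetLike.coe_mem _)), l2_opNorm_diagonal]
  exact (pi_norm_le_iff_of_nonneg hC).2 fun i => by simpa using hf i

end Matrix

lemma matFun_eq_cfc {d : ℕ} {A : Matrix (Fin d) (Fin d) ℝ} (hA : A.IsHermitian) (h : ℝ → ℝ) :
    matFun A h = cfc h A := by
  rw [matFun, dif_pos hA, hA.cfc_eq, IsHermitian.cfc]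
  rfl

lemma matFun_smul_one_add_eq_cfc {d : ℕ} {A : Matrix (Fin d) (Fin d) ℝ} (hA : A.IsHermitian)
    (r : ℝ) (h : ℝ → ℝ) : matFun (r • 1 + A) h = cfc (fun t => h (r + t)) A := by
  have hrA : (r • 1 + A).IsHermitian := (isHermitian_one.smul (IsSelfAdjoint.all r)).add hA
  rw [matFun_eq_cfc hrA, ← Algebra.algebraMap_eq_smul_one]
  exact (cfc_comp_const_add r h A ((A.finite_real_spectrum.image _).continuousOn h) hA).symm

theorem statement0_general {d : ℕ} (A : Matrix (Fin d) (Fin d) ℝ)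
    (hA : A.PosSemidef) (lam u b γ : ℝ) (hlam : 0 < lam) (hu : 0 < u)
    (hb : 0 ≤ b) (hγ : 0 ≤ γ) (g : ℝ → ℝ)
    (hg1 : ∀ i : Fin d, |g (hA.1.eigenvalues i) * hA.1.eigenvalues i| ≤ b)
    (hg2 : ∀ i : Fin d,
      |1 - g (hA.1.eigenvalues i) * hA.1.eigenvalues i| * hA.1.eigenvalues i ^ u ≤ γ * lam ^ u) :
    opNorm ((matFun A g * A - 1) * matFun (lam • (1 : Matrix (Fin d) (Fin d) ℝ) + A) (fun t => t ^ u)) ≤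
      (2 : ℝ) ^ u * (b + 1 + γ) * lam ^ u := by
  have hH := hA.isHermitian
  have hcont : ∀ f : ℝ → ℝ, ContinuousOn f (spectrum ℝ A) := A.finite_real_spectrum.continuousOn
  have hprod : (matFun A g * A - 1) * matFun (lam • 1 + A) (fun t => t ^ u) =
      cfc (fun t => (g t * t - 1) * (lam + t) ^ u) A := by
    rw [matFun_eq_cfc hH, matFun_smul_one_add_eq_cfc hH, cfc_mul _ _ A (hcont _) (hcont _),
      cfc_sub _ _ A (hcont _) (hcont _), cfc_mul _ _ A (hcont _) (hcont _), cfc_id' ℝ A,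
      cfc_const_one ℝ A]
  rw [opNorm, hprod]
  exact hH.l2_opNorm_cfc_le (by positivity) fun i =>
    abs_sub_one_mul_add_rpow_le hlam.le (hA.eigenvalues_nonneg i) hu.le (hg1 i) (hg2 i)

/-- If `A` is PSD, `λ > 0`, `u > 0`, `b, γ ≥ 0` and the filter function `g`
satisfies `|g(σ)σ| ≤ b` and `|1 - g(σ)σ|·σ^u ≤ γ·λ^u` for every eigenvalue `σ` of `A`, then
`‖(g(A)A - I)(λI + A)^u‖ ≤ 2^u (b + 1 + γ) λ^u`. -/
theorem statement0 {d : ℕ} (hd : 0 < d) (A : Matrix (Fin d) (Fin d) ℝ)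
    (hA : A.PosSemidef) (lam u b γ : ℝ) (hlam : 0 < lam) (hu : 0 < u)
    (hb : 0 ≤ b) (hγ : 0 ≤ γ) (g : ℝ → ℝ)
    (hg1 : ∀ i : Fin d, |g (hA.1.eigenvalues i) * hA.1.eigenvalues i| ≤ b)
    (hg2 : ∀ i : Fin d,
      |1 - g (hA.1.eigenvalues i) * hA.1.eigenvalues i| * hA.1.eigenvalues i ^ u ≤ γ * lam ^ u) :
    opNorm ((matFun A g * A - 1) * matFun (lam • (1 : Matrix (Fin d) (Fin d) ℝ) + A) (fun t => t ^ u)) ≤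
      (2 : ℝ) ^ u * (b + 1 + γ) * lam ^ u :=
  statement0_general A hA lam u b γ hlam hu hb hγ g hg1 hg2
end

section
/- Let Σ and Σ̂ be real symmetric positive semidefinite d×d matrices, λ > 0, and 0 ≤ c̃ < 1/2. If ‖(Σ + λI)^{-1/2}·(Σ − Σ̂)·(Σ + λI)^{-1/2}‖ ≤ c̃, then ‖(Σ + λI)^{1/2}·(Σ̂ + λI)^{-1/2}‖ ≤ √(1/(1 − c̃)). -/
open Matrix MeasureTheory

/-!
Write `A = Σ + λI`, `B = Σ̂ + λI` and `R = A^{1/2}`, `T = B^{1/2}`. The self-adjoint matrix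
`R⁻¹ (A - B) R⁻¹ = R⁻¹ (Σ - Σ̂) R⁻¹` has norm at most `c̃`, so it lies below `c̃ I` in the Loewner
order; conjugating by `R` gives `(1 - c̃) A ≤ B`. Conjugating by `T⁻¹` then gives
`(R T⁻¹)ᴴ (R T⁻¹) = T⁻¹ A T⁻¹ ≤ (1 - c̃)⁻¹ I`, which is the bound `‖R T⁻¹‖² ≤ 1 / (1 - c̃)`.
-/

open scoped MatrixOrder Matrix.Norms.L2Operator ComplexOrder

namespace Matrix

lemma PosSemidef.add_smul_one_posDef {n 𝕜 : Type*} [DecidableEq n] [RCLike 𝕜] {S : Matrix n n 𝕜}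
    (hS : S.PosSemidef) {lam : ℝ} (hlam : 0 < lam) : (S + lam • 1).PosDef :=
  PosDef.posSemidef_add hS (PosDef.one.smul hlam)

variable {n 𝕜 : Type*} [Fintype n] [DecidableEq n] [RCLike 𝕜]

local notation "φ" => toEuclideanCLM (n := n) (𝕜 := 𝕜)

lemma IsHermitian.le_smul_one_iff {Y : Matrix n n 𝕜} (hY : Y.IsHermitian) {κ : ℝ} :
    Y ≤ κ • 1 ↔ ∀ v, RCLike.re (inner 𝕜 (φ Y v) v) ≤ κ * ‖v‖ ^ 2 := by
  have hH : (κ • 1 - Y).IsHermitian := (isHermitian_one.smul (.all κ)).sub hY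
  rw [le_iff, ← isPositive_toEuclideanLin_iff, LinearMap.IsPositive, isSymmetric_toEuclideanLin_iff]
  refine (and_iff_right hH).trans (forall_congr' fun v => ?_)
  simp only [← coe_toEuclideanCLM_eq_toEuclideanLin, map_sub,
    LinearMap.sub_apply, ContinuousLinearMap.coe_coe, inner_sub_left, sub_nonneg]
  have hsmul : φ (κ • 1) v = (κ : 𝕜) • v := by
    rw [RCLike.real_smul_eq_coe_smul (K := 𝕜), map_smul, map_one]
    rfl
  rw [hsmul, inner_smul_real_left, inner_self_eq_norm_sq_to_K]
  norm_cast

lemma IsHermitian.le_smul_one_of_norm_le {X : Matrix n n 𝕜} (hX : X.IsHermitian) {c : ℝ}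
    (h : ‖X‖ ≤ c) : X ≤ c • 1 := by
  refine hX.le_smul_one_iff.mpr fun v => ?_
  calc RCLike.re (inner 𝕜 (φ X v) v) ≤ ‖φ X v‖ * ‖v‖ := re_inner_le_norm _ _
    _ ≤ ‖X‖ * ‖v‖ * ‖v‖ := by gcongr; exact (φ X).le_opNorm v
    _ ≤ c * ‖v‖ ^ 2 := by rw [sq, ← mul_assoc]; gcongr

lemma norm_le_sqrt_of_conjTranspose_mul_self_le {M : Matrix n n 𝕜} {κ : ℝ}
    (h : Mᴴ * M ≤ κ • 1) : ‖M‖ ≤ √κ := by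
  have hquad := (isHermitian_conjTranspose_mul_self M).le_smul_one_iff.mp h
  refine ContinuousLinearMap.opNorm_le_bound _ (Real.sqrt_nonneg κ) fun v => ?_
  have hv : ‖φ M v‖ ^ 2 ≤ κ * ‖v‖ ^ 2 := by
    have := hquad v
    rwa [map_mul, ← star_eq_conjTranspose, map_star, mul_apply_eq_comp,
      ContinuousLinearMap.star_eq_adjoint, ContinuousLinearMap.adjoint_inner_left,
      inner_self_eq_norm_sq] at this
  calc ‖φ M v‖ = √(‖φ M v‖ ^ 2) := (Real.sqrt_sq (norm_nonneg _)).symm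
    _ ≤ √(κ * ‖v‖ ^ 2) := Real.sqrt_le_sqrt hv
    _ = √κ * ‖v‖ := by rw [Real.sqrt_mul' _ (sq_nonneg _), Real.sqrt_sq (norm_nonneg v)]

lemma PosDef.one_sub_smul_le_of_norm_conj_sub_le {A B : Matrix n n 𝕜} (hA : A.PosDef)
    (hB : B.IsHermitian) {c : ℝ} (h : ‖(CFC.sqrt A)⁻¹ * (A - B) * (CFC.sqrt A)⁻¹‖ ≤ c) :
    (1 - c) • A ≤ B := by
  set R := CFC.sqrt A
  have hR : R.IsHermitian := (CFC.sqrt_nonneg A).posSemidef.isHermitian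
  have hRdet : IsUnit R.det := (isUnit_iff_isUnit_det R).mp hA.isStrictlyPositive.isUnit_cfcSqrt
  have hX : ((R⁻¹) * (A - B) * R⁻¹).IsHermitian := by
    simpa [hR.inv.eq] using isHermitian_conjTranspose_mul_mul R⁻¹ (hA.isHermitian.sub hB)
  have hle := IsSelfAdjoint.conjugate_le_conjugate (hX.le_smul_one_of_norm_le h) hR
  have hcancel : R * (R⁻¹ * (A - B) * R⁻¹) * R = A - B := by
    rw [← mul_assoc, ← mul_assoc, mul_nonsing_inv R hRdet, one_mul, mul_assoc,
      nonsing_inv_mul R hRdet, mul_one]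
  rw [hcancel, mul_smul_comm, smul_mul_assoc, mul_one,
    CFC.sqrt_mul_sqrt_self A hA.posSemidef.nonneg] at hle
  rw [sub_smul, one_smul]
  exact sub_le_comm.mp hle

lemma norm_sqrt_mul_inv_sqrt_le_of_le_smul {A B : Matrix n n 𝕜} (hA : A.PosSemidef)
    (hB : B.PosDef) {κ : ℝ} (h : A ≤ κ • B) : ‖CFC.sqrt A * (CFC.sqrt B)⁻¹‖ ≤ √κ := by
  set T := CFC.sqrt B
  have hT : T.IsHermitian := (CFC.sqrt_nonneg B).posSemidef.isHermitian
  have hTdet : IsUnit T.det := (isUnit_iff_isUnit_det T).mp hB.isStrictlyPositive.isUnit_cfcSqrt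
  have hR : (CFC.sqrt A).IsHermitian := (CFC.sqrt_nonneg A).posSemidef.isHermitian
  have hle := IsSelfAdjoint.conjugate_le_conjugate h hT.inv
  have hcancel : T⁻¹ * B * T⁻¹ = 1 := by
    rw [← CFC.sqrt_mul_sqrt_self B hB.posSemidef.nonneg, ← mul_assoc, nonsing_inv_mul T hTdet,
      one_mul, mul_nonsing_inv T hTdet]
  rw [mul_smul_comm, smul_mul_assoc, hcancel] at hle
  apply norm_le_sqrt_of_conjTranspose_mul_self_le
  rwa [conjTranspose_mul, hT.inv.eq, hR.eq, mul_assoc, ← mul_assoc (CFC.sqrt A),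
    CFC.sqrt_mul_sqrt_self A hA.nonneg, ← mul_assoc]

lemma PosDef.norm_sqrt_mul_inv_sqrt_le_of_norm_conj_sub_le {A B : Matrix n n 𝕜} (hA : A.PosDef)
    (hB : B.PosDef) {c : ℝ} (hc : c < 1)
    (h : ‖(CFC.sqrt A)⁻¹ * (A - B) * (CFC.sqrt A)⁻¹‖ ≤ c) :
    ‖CFC.sqrt A * (CFC.sqrt B)⁻¹‖ ≤ √(1 / (1 - c)) := by
  have hc' : 0 < 1 - c := sub_pos.mpr hc
  refine norm_sqrt_mul_inv_sqrt_le_of_le_smul hA.posSemidef hB ?_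
  have := smul_le_smul_of_nonneg_left (hA.one_sub_smul_le_of_norm_conj_sub_le hB.isHermitian h)
    (one_div_pos.mpr hc').le
  rwa [smul_smul, one_div_mul_cancel hc'.ne', one_smul] at this

end Matrix

lemma matFun_sqrt_eq_sqrt {d : ℕ} {A : Matrix (Fin d) (Fin d) ℝ} (hA : A.PosSemidef) :
    matFun A Real.sqrt = CFC.sqrt A := by
  rw [matFun, dif_pos hA.1, CFC.sqrt_eq_real_sqrt A hA.nonneg, cfcₙ_eq_cfc (hf0 := Real.sqrt_zero),
    hA.1.cfc_eq, IsHermitian.cfc, Unitary.conjStarAlgAut_apply]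
  rfl

theorem statement1_general {d : ℕ} (S Shat : Matrix (Fin d) (Fin d) ℝ)
    (hS : S.PosSemidef) (hShat : Shat.PosSemidef) (lam c : ℝ)
    (hlam : 0 < lam) (hc : c < 1 / 2)
    (h : opNorm ((matFun (S + lam • 1) Real.sqrt)⁻¹ * (S - Shat) *
        (matFun (S + lam • 1) Real.sqrt)⁻¹) ≤ c) :
    opNorm (matFun (S + lam • 1) Real.sqrt * (matFun (Shat + lam • 1) Real.sqrt)⁻¹) ≤
      Real.sqrt (1 / (1 - c)) := by
  have hA := hS.add_smul_one_posDef hlam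
  have hB := hShat.add_smul_one_posDef hlam
  rw [← add_sub_add_right_eq_sub S Shat (lam • 1)] at h
  simp only [opNorm, ← cstar_norm_def, matFun_sqrt_eq_sqrt hA.posSemidef,
    matFun_sqrt_eq_sqrt hB.posSemidef] at h ⊢
  exact hA.norm_sqrt_mul_inv_sqrt_le_of_norm_conj_sub_le hB (by linarith) h

/-- If `Σ, Σ̂` are PSD, `λ > 0`, `0 ≤ c̃ < 1/2` and
`‖(Σ+λI)^{-1/2} (Σ - Σ̂) (Σ+λI)^{-1/2}‖ ≤ c̃`, then
`‖(Σ+λI)^{1/2} (Σ̂+λI)^{-1/2}‖ ≤ √(1/(1-c̃))`. -/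
theorem statement1 {d : ℕ} (hd : 0 < d) (S Shat : Matrix (Fin d) (Fin d) ℝ)
    (hS : S.PosSemidef) (hShat : Shat.PosSemidef) (lam c : ℝ)
    (hlam : 0 < lam) (hc0 : 0 ≤ c) (hc : c < 1 / 2)
    (h : opNorm ((matFun (S + lam • 1) Real.sqrt)⁻¹ * (S - Shat) *
        (matFun (S + lam • 1) Real.sqrt)⁻¹) ≤ c) :
    opNorm (matFun (S + lam • 1) Real.sqrt * (matFun (Shat + lam • 1) Real.sqrt)⁻¹) ≤
      Real.sqrt (1 / (1 - c)) :=
  statement1_general S Shat hS hShat lam c hlam hc h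
end

section
/- Let T be a positive integer, let ξ₁, …, ξ_{T+1} and η₁, …, η_T be positive real numbers, and suppose that for every t with 1 ≤ t ≤ T one has ξ_t ≤ Σ_{ℓ=t}^{T} η_ℓ·ξ_{ℓ+1}. Then for every t with 1 ≤ t ≤ T one has ξ_t ≤ (Π_{ℓ=t}^{T-1} (η_ℓ + 1))·η_T·ξ_{T+1} (with the empty product equal to 1 when t = T). -/
open Finset

/- The sums `S t = ∑_{ℓ=t}^{T} η ℓ ξ (ℓ+1)` satisfy `S t = η t ξ (t+1) + S (t+1) ≤ (η t + 1) S (t+1)`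
because `ξ (t+1) ≤ S (t+1)`; unrolling this backward recursion down to `S T = η T ξ (T+1)` gives
the bound, and `ξ t ≤ S t` finishes. -/

theorem le_prod_Ico_mul_of_le_mul_succ {R : Type*} [CommMonoidWithZero R] [PartialOrder R]
    [PosMulMono R] {S c : ℕ → R} {a b : ℕ}
    (hc : ∀ t, a ≤ t → t < b → 0 ≤ c t) (hS : ∀ t, a ≤ t → t < b → S t ≤ c t * S (t + 1)) :
    ∀ t, a ≤ t → t ≤ b → S t ≤ (∏ ℓ ∈ Ico t b, c ℓ) * S b := by
  intro t hat htb
  induction htb using Nat.decreasingInduction with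
  | self => simp
  | of_succ k hk ih =>
    rw [prod_eq_prod_Ico_succ_bot hk, mul_assoc]
    exact (hS k hat hk).trans (mul_le_mul_of_nonneg_left (ih (by omega)) (hc k hat hk))

theorem statement6_general (T : ℕ) (ξ η : ℕ → ℝ)
    (hη : ∀ t, 1 ≤ t → t ≤ T → 0 < η t)
    (hrec : ∀ t, 1 ≤ t → t ≤ T → ξ t ≤ ∑ ℓ ∈ Finset.Icc t T, η ℓ * ξ (ℓ + 1)) :
    ∀ t, 1 ≤ t → t ≤ T →
      ξ t ≤ (∏ ℓ ∈ Finset.Ico t T, (η ℓ + 1)) * η T * ξ (T + 1) := by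
  set S : ℕ → ℝ := fun t ↦ ∑ ℓ ∈ Icc t T, η ℓ * ξ (ℓ + 1)
  have hstep : ∀ t, 1 ≤ t → t < T → S t ≤ (η t + 1) * S (t + 1) := by
    intro t ht htT
    have hξS : ξ (t + 1) ≤ S (t + 1) := hrec (t + 1) (by omega) htT
    have hηt : 0 ≤ η t := (hη t ht htT.le).le
    calc S t = η t * ξ (t + 1) + S (t + 1) := by
          simp only [S]; rw [← add_sum_Ioc_eq_sum_Icc htT.le, Icc_add_one_left_eq_Ioc]
      _ ≤ η t * S (t + 1) + S (t + 1) := by gcongr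
      _ = (η t + 1) * S (t + 1) := by ring
  have hST : S T = η T * ξ (T + 1) := by simp [S]
  intro t ht htT
  calc ξ t ≤ S t := hrec t ht htT
    _ ≤ (∏ ℓ ∈ Ico t T, (η ℓ + 1)) * S T :=
      le_prod_Ico_mul_of_le_mul_succ (fun k hk hkT ↦ by linarith [hη k hk hkT.le]) hstep t ht htT
    _ = (∏ ℓ ∈ Ico t T, (η ℓ + 1)) * η T * ξ (T + 1) := by rw [hST, mul_assoc]

/-- If `ξ₁, …, ξ_{T+1}` and `η₁, …, η_T` are positive and
`ξ_t ≤ Σ_{ℓ=t}^{T} η_ℓ ξ_{ℓ+1}` for all `1 ≤ t ≤ T`, then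
`ξ_t ≤ (Π_{ℓ=t}^{T-1} (η_ℓ + 1)) η_T ξ_{T+1}` for all `1 ≤ t ≤ T`. -/
theorem statement6 (T : ℕ) (hT : 0 < T) (ξ η : ℕ → ℝ)
    (hξ : ∀ t, 1 ≤ t → t ≤ T + 1 → 0 < ξ t)
    (hη : ∀ t, 1 ≤ t → t ≤ T → 0 < η t)
    (hrec : ∀ t, 1 ≤ t → t ≤ T → ξ t ≤ ∑ ℓ ∈ Finset.Icc t T, η ℓ * ξ (ℓ + 1)) :
    ∀ t, 1 ≤ t → t ≤ T →
      ξ t ≤ (∏ ℓ ∈ Finset.Ico t T, (η ℓ + 1)) * η T * ξ (T + 1) :=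
  statement6_general T ξ η hη hrec
end

section
/- Let (Ω, 𝔉, P) be a probability space, X : Ω → ℝ^d measurable, θ ∈ ℝ^d, C, B ≥ 0, and λ > 0. Suppose ‖X(ω)‖₂ ≤ C and |X(ω)ᵀθ| ≤ B for P-almost every ω, and let Σ = E[X Xᵀ]. Then E[‖(Σ + λI)^{-1/2}·(X(ω)X(ω)ᵀ − Σ)·θ‖₂²] ≤ B²·Tr(Σ·(Σ + λI)^{-1}). -/
/-!
Write `M = (Σ + λI)^{-1/2}` and `Y = (Xᵀθ) • M X`. Then `E[Y] = M Σ θ`, so the integrand is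
`‖Y - E[Y]‖²`, and a variance is at most the second moment:
`E‖Y - E[Y]‖² ≤ E‖Y‖² ≤ B² E‖M X‖² = B² Tr(M Σ M) = B² Tr(Σ (Σ + λI)⁻¹)`,
the last step because `M` is symmetric with `M² = (Σ + λI)⁻¹`.
-/

open Matrix MeasureTheory

/-- The second-moment (covariance) matrix `Σ = E[X Xᵀ]`, defined as the entrywise
Bochner integral of the outer product `X Xᵀ`. -/
noncomputable def covMatrix {d : ℕ} {Ω : Type*} [MeasurableSpace Ω] (P : Measure Ω)
    (X : Ω → Fin d → ℝ) : Matrix (Fin d) (Fin d) ℝ :=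
  Matrix.of fun i j => ∫ ω, X ω i * X ω j ∂P

namespace Matrix

variable {d : ℕ}

lemma matFun_eq_cfc {A : Matrix (Fin d) (Fin d) ℝ} (hA : A.IsHermitian) (h : ℝ → ℝ) :
    matFun A h = cfc h A := by
  rw [hA.cfc_eq, IsHermitian.cfc, matFun, dif_pos hA, Unitary.conjStarAlgAut_apply]
  rfl

lemma transpose_matFun (A : Matrix (Fin d) (Fin d) ℝ) (h : ℝ → ℝ) :
    (matFun A h)ᵀ = matFun A h := by
  by_cases hA : A.IsHermitian
  · rw [matFun_eq_cfc hA, ← conjTranspose_eq_transpose_of_trivial]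
    exact cfc_predicate h A
  · rw [matFun, dif_neg hA, transpose_zero]

lemma PosSemidef.matFun_sqrt_mul_self {A : Matrix (Fin d) (Fin d) ℝ} (hA : A.PosSemidef) :
    matFun A Real.sqrt * matFun A Real.sqrt = A := by
  rw [matFun_eq_cfc hA.isHermitian, ← cfc_mul Real.sqrt Real.sqrt A]
  conv_rhs => rw [← cfc_id' ℝ A hA.isHermitian]
  refine cfc_congr fun x hx => ?_
  rw [hA.isHermitian.spectrum_real_eq_range_eigenvalues] at hx
  obtain ⟨i, rfl⟩ := hx
  exact Real.mul_self_sqrt (hA.eigenvalues_nonneg i)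

lemma trace_mul_mul_transpose {m n : Type*} [Fintype m] [Fintype n] (M : Matrix m n ℝ)
    (N : Matrix n n ℝ) :
    trace (M * N * Mᵀ) = ∑ i, M i ⬝ᵥ (N *ᵥ M i) := by
  refine Finset.sum_congr rfl fun i _ => ?_
  simp only [diag_apply, mul_apply, transpose_apply, dotProduct, mulVec, Finset.mul_sum,
    Finset.sum_mul]
  rw [Finset.sum_comm]
  exact Finset.sum_congr rfl fun j _ => Finset.sum_congr rfl fun k _ => by ring

lemma PosSemidef.trace_inv_sqrt_mul_mul_inv_sqrt {A : Matrix (Fin d) (Fin d) ℝ}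
    (hA : A.PosSemidef) (N : Matrix (Fin d) (Fin d) ℝ) :
    trace ((matFun A Real.sqrt)⁻¹ * N * ((matFun A Real.sqrt)⁻¹)ᵀ) = trace (N * A⁻¹) := by
  rw [transpose_nonsing_inv, transpose_matFun, trace_mul_cycle, ← mul_inv_rev,
    hA.matFun_sqrt_mul_self, trace_mul_comm]

lemma mulVec_vecMulVec_sub_mulVec {m n : Type*} [Fintype n] (M : Matrix m n ℝ)
    (N : Matrix n n ℝ) (x θ : n → ℝ) (i : m) :
    (M *ᵥ ((vecMulVec x x - N) *ᵥ θ)) i = (x ⬝ᵥ θ) * (M i ⬝ᵥ x) - (M *ᵥ (N *ᵥ θ)) i := by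
  rw [sub_mulVec, mulVec_sub, vecMulVec_mulVec, op_smul_eq_smul, mulVec_smul, Pi.sub_apply,
    Pi.smul_apply, smul_eq_mul]
  rfl

end Matrix

lemma enorm2_sq {d : ℕ} (x : Fin d → ℝ) : enorm2 x ^ 2 = ∑ i, x i ^ 2 :=
  Real.sq_sqrt (Finset.sum_nonneg fun i _ => sq_nonneg (x i))

lemma abs_le_enorm2 {d : ℕ} (x : Fin d → ℝ) (i : Fin d) : |x i| ≤ enorm2 x := by
  rw [← Real.sqrt_sq_eq_abs]
  exact Real.sqrt_le_sqrt
    (Finset.single_le_sum (fun j _ => sq_nonneg (x j)) (Finset.mem_univ i))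

section SecondMoments

variable {d : ℕ} {Ω : Type*} [MeasurableSpace Ω] {P : Measure Ω} {X : Ω → Fin d → ℝ}

lemma memLp_dotProduct (hX : ∀ i, MemLp (fun ω => X ω i) 2 P) (a : Fin d → ℝ) :
    MemLp (fun ω => a ⬝ᵥ X ω) 2 P :=
  memLp_finsetSum _ fun i _ => (hX i).const_mul (a i)

lemma integrable_dotProduct_mul_dotProduct (hX : ∀ i, MemLp (fun ω => X ω i) 2 P)
    (a b : Fin d → ℝ) : Integrable (fun ω => (a ⬝ᵥ X ω) * (b ⬝ᵥ X ω)) P :=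
  (memLp_dotProduct hX a).integrable_mul (memLp_dotProduct hX b)

lemma integral_dotProduct_mul_dotProduct (hX : ∀ i, MemLp (fun ω => X ω i) 2 P)
    (a b : Fin d → ℝ) :
    ∫ ω, (a ⬝ᵥ X ω) * (b ⬝ᵥ X ω) ∂P = a ⬝ᵥ (covMatrix P X *ᵥ b) := by
  have hint (j k : Fin d) : Integrable (fun ω => a j * b k * (X ω j * X ω k)) P :=
    ((hX j).integrable_mul (hX k)).const_mul _
  calc ∫ ω, (a ⬝ᵥ X ω) * (b ⬝ᵥ X ω) ∂P
      = ∫ ω, ∑ j, ∑ k, a j * b k * (X ω j * X ω k) ∂P := by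
        congr with ω
        simp only [dotProduct, Finset.sum_mul_sum]
        exact Finset.sum_congr rfl fun j _ => Finset.sum_congr rfl fun k _ => by ring
    _ = ∑ j, ∑ k, a j * b k * ∫ ω, X ω j * X ω k ∂P := by
        rw [integral_finsetSum _ fun j _ => integrable_finsetSum _ fun k _ => hint j k]
        refine Finset.sum_congr rfl fun j _ => ?_
        rw [integral_finsetSum _ fun k _ => hint j k]
        simp only [integral_const_mul]
    _ = a ⬝ᵥ (covMatrix P X *ᵥ b) := by
        simp only [dotProduct, mulVec, covMatrix, of_apply, Finset.mul_sum]
        exact Finset.sum_congr rfl fun j _ => Finset.sum_congr rfl fun k _ => by ring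

lemma integrable_sum_dotProduct_mul_self {m : Type*} [Fintype m]
    (hX : ∀ i, MemLp (fun ω => X ω i) 2 P) (M : Matrix m (Fin d) ℝ) :
    Integrable (fun ω => ∑ i, (M i ⬝ᵥ X ω) * (M i ⬝ᵥ X ω)) P :=
  integrable_finsetSum _ fun i _ => integrable_dotProduct_mul_dotProduct hX (M i) (M i)

lemma integral_sum_dotProduct_mul_self {m : Type*} [Fintype m]
    (hX : ∀ i, MemLp (fun ω => X ω i) 2 P) (M : Matrix m (Fin d) ℝ) :
    ∫ ω, ∑ i, (M i ⬝ᵥ X ω) * (M i ⬝ᵥ X ω) ∂P = trace (M * covMatrix P X * Mᵀ) := by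
  rw [integral_finsetSum _ fun i _ => integrable_dotProduct_mul_dotProduct hX (M i) (M i),
    trace_mul_mul_transpose]
  simp only [integral_dotProduct_mul_dotProduct hX]

lemma covMatrix_posSemidef (hX : ∀ i, MemLp (fun ω => X ω i) 2 P) :
    (covMatrix P X).PosSemidef := by
  refine posSemidef_iff_dotProduct_mulVec.mpr ⟨?_, fun x => ?_⟩
  · ext i j
    simp only [conjTranspose_apply, star_trivial, covMatrix, of_apply, mul_comm]
  · rw [star_trivial, ← integral_dotProduct_mul_dotProduct hX]
    exact integral_nonneg fun ω => mul_self_nonneg _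

end SecondMoments

lemma integral_sum_sq_sub_integral_le {Ω ι : Type*} [MeasurableSpace Ω] {P : Measure Ω}
    [IsProbabilityMeasure P] [Fintype ι] {f : ι → Ω → ℝ} (hf : ∀ i, MemLp (f i) 2 P) :
    ∫ ω, ∑ i, (f i ω - ∫ ω', f i ω' ∂P) ^ 2 ∂P ≤ ∫ ω, ∑ i, f i ω ^ 2 ∂P := by
  have hcentered (i : ι) : Integrable (fun ω => (f i ω - ∫ ω', f i ω' ∂P) ^ 2) P :=
    ((hf i).sub (memLp_const _)).integrable_sq
  have hsq (i : ι) : Integrable (fun ω => f i ω ^ 2) P := (hf i).integrable_sq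
  rw [integral_finsetSum _ fun i _ => hcentered i, integral_finsetSum _ fun i _ => hsq i]
  refine Finset.sum_le_sum fun i _ => ?_
  rw [← ProbabilityTheory.variance_eq_integral (hf i).aemeasurable]
  exact ProbabilityTheory.variance_le_expectation_sq (hf i).aestronglyMeasurable

theorem statement15_general {d : ℕ} {Ω : Type*} [MeasurableSpace Ω]
    (P : Measure Ω) [IsProbabilityMeasure P]
    (X : Ω → Fin d → ℝ) (hX : Measurable X) (θ : Fin d → ℝ)
    (C B : ℝ) (lam : ℝ) (hlam : 0 < lam)
    (hXC : ∀ᵐ ω ∂P, enorm2 (X ω) ≤ C)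
    (hXθ : ∀ᵐ ω ∂P, |X ω ⬝ᵥ θ| ≤ B) :
    ∫ ω, (enorm2 (((matFun (covMatrix P X + lam • 1) Real.sqrt)⁻¹) *ᵥ
          ((Matrix.vecMulVec (X ω) (X ω) - covMatrix P X) *ᵥ θ))) ^ 2 ∂P ≤
      B ^ 2 * Matrix.trace (covMatrix P X * (covMatrix P X + lam • 1)⁻¹) := by
  have hXL2 (i : Fin d) : MemLp (fun ω => X ω i) 2 P :=
    .of_bound (measurable_pi_apply i |>.comp hX).aestronglyMeasurable C
      (hXC.mono fun ω h => (abs_le_enorm2 (X ω) i).trans h)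
  have hA : (covMatrix P X + lam • 1).PosSemidef :=
    (covMatrix_posSemidef hXL2).add (PosSemidef.one.smul hlam.le)
  set M := (matFun (covMatrix P X + lam • 1) Real.sqrt)⁻¹
  set f : Fin d → Ω → ℝ := fun i ω => (X ω ⬝ᵥ θ) * (M i ⬝ᵥ X ω) with hf_def
  have hθX : MemLp (fun ω => X ω ⬝ᵥ θ) ⊤ P := by
    refine memLp_top_of_bound ?_ B hXθ
    simpa only [dotProduct_comm] using (memLp_dotProduct hXL2 θ).aestronglyMeasurable
  have hf (i : Fin d) : MemLp (f i) 2 P := (memLp_dotProduct hXL2 (M i)).mul' hθX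
  have hmean (i : Fin d) : ∫ ω, f i ω ∂P = (M *ᵥ (covMatrix P X *ᵥ θ)) i := by
    simp only [hf_def, dotProduct_comm _ θ, mul_comm (θ ⬝ᵥ _)]
    exact integral_dotProduct_mul_dotProduct hXL2 _ _
  calc _ = ∫ ω, ∑ i, (f i ω - ∫ ω', f i ω' ∂P) ^ 2 ∂P := by
        simp only [enorm2_sq, mulVec_vecMulVec_sub_mulVec, hmean]
        rfl
    _ ≤ ∫ ω, ∑ i, f i ω ^ 2 ∂P := integral_sum_sq_sub_integral_le hf
    _ ≤ ∫ ω, B ^ 2 * ∑ i, (M i ⬝ᵥ X ω) * (M i ⬝ᵥ X ω) ∂P := by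
        refine integral_mono_of_nonneg (.of_forall fun ω => by positivity)
          ((integrable_sum_dotProduct_mul_self hXL2 M).const_mul _) ?_
        filter_upwards [hXθ] with ω hω
        rw [Finset.mul_sum]
        refine Finset.sum_le_sum fun i _ => ?_
        rw [hf_def, mul_pow, ← sq, ← sq_abs]
        gcongr
    _ = B ^ 2 * trace (covMatrix P X * (covMatrix P X + lam • 1)⁻¹) := by
        rw [integral_const_mul, integral_sum_dotProduct_mul_self hXL2,
          hA.trace_inv_sqrt_mul_mul_inv_sqrt]

/-- If `‖X‖₂ ≤ C` and `|Xᵀθ| ≤ B` a.s. and `λ > 0`, then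
`E[‖(Σ+λI)^{-1/2} (X Xᵀ - Σ) θ‖₂²] ≤ B² Tr(Σ (Σ+λI)⁻¹)` where `Σ = E[X Xᵀ]`. -/
theorem statement15 {d : ℕ} (hd : 0 < d) {Ω : Type*} [MeasurableSpace Ω]
    (P : Measure Ω) [IsProbabilityMeasure P]
    (X : Ω → Fin d → ℝ) (hX : Measurable X) (θ : Fin d → ℝ)
    (C B : ℝ) (hC : 0 ≤ C) (hB : 0 ≤ B) (lam : ℝ) (hlam : 0 < lam)
    (hXC : ∀ᵐ ω ∂P, enorm2 (X ω) ≤ C)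
    (hXθ : ∀ᵐ ω ∂P, |X ω ⬝ᵥ θ| ≤ B) :
    ∫ ω, (enorm2 (((matFun (covMatrix P X + lam • 1) Real.sqrt)⁻¹) *ᵥ
          ((Matrix.vecMulVec (X ω) (X ω) - covMatrix P X) *ᵥ θ))) ^ 2 ∂P ≤
      B ^ 2 * Matrix.trace (covMatrix P X * (covMatrix P X + lam • 1)⁻¹) :=
  statement15_general P X hX θ C B lam hlam hXC hXθ
end
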